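/- arXiv:1207.4010 — 3 statements merged into one kernel-verified Lean document; each statement's English description precedes it below -/
import Mathlib

section
/- Let B be a finite Blaschke product of order n ≥ 1. Then the derivative B′ has exactly n − 1 zeros in the open unit disk 𝔻, counted with multiplicity. -/
/-!
Write `B = λ P / Q` with `P = ∏ (z - αⱼ)` and `Q = ∏ (1 - conj αⱼ z)`. Since `Q` has no zeros on
the closed disk, the zeros of `B'` in `𝔻` are, with multiplicity, those of the Wronskian
`W = Q P' - Q' P = ∑ⱼ (1 - |αⱼ|²) ∏_{k ≠ j} (1 - conj αₖ z) (z - αₖ)`. Each quadratic factor is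
self-inversive of degree 2, so `W` is self-inversive of degree `2 (n - 1)`: its roots, together
with a root at infinity for every missing degree, are symmetric under the reflection
`z ↦ 1 / conj z` in the unit circle. On the circle each quadratic factor equals `z |z - αₖ|²`,
so `W(z)` is `z ^ (n - 1)` times a positive real and does not vanish. Hence exactly half of the
`2 (n - 1)` roots of `W` lie in `𝔻`.
-/

open Complex Metric

noncomputable section

/-- The open unit disk in ℂ. -/
def unitDisk : Set ℂ := Metric.ball (0 : ℂ) 1

/-- `B` is a finite Blaschke product of order `n`:
`B(z) = λ ∏ (z - α j) / (1 - conj (α j) * z)` with `|λ| = 1` and `|α j| < 1`. -/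
def IsBlaschkeOf (n : ℕ) (B : ℂ → ℂ) : Prop :=
  ∃ (lam : ℂ) (α : Fin n → ℂ),
    ‖lam‖ = 1 ∧ (∀ j, ‖α j‖ < 1) ∧
      ∀ z : ℂ, B z = lam * ∏ j, (z - α j) / (1 - (starRingEnd ℂ) (α j) * z)

/-- `g` has a zero of order exactly `m` at `z₀`. -/
def ZeroOrderAt (g : ℂ → ℂ) (z₀ : ℂ) (m : ℕ) : Prop :=
  ∃ h : ℂ → ℂ, AnalyticAt ℂ h z₀ ∧ h z₀ ≠ 0 ∧
    ∀ᶠ z in nhds z₀, g z = (z - z₀) ^ m * h z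

/-- The zeros of `g` in the set `s`, counted with multiplicity, number exactly `n`. -/
def CountZerosIn (g : ℂ → ℂ) (s : Set ℂ) (n : ℕ) : Prop :=
  ∃ (t : Finset ℂ) (m : ℂ → ℕ),
    (∀ z : ℂ, z ∈ t ↔ z ∈ s ∧ g z = 0) ∧
    (∀ z ∈ t, ZeroOrderAt g z (m z)) ∧
    ∑ z ∈ t, m z = n

/-- The solutions in the unit disk of `f z = w`, counted with multiplicity, number exactly `n`. -/
def FiberCount (f : ℂ → ℂ) (w : ℂ) (n : ℕ) : Prop :=
  CountZerosIn (fun z => f z - w) unitDisk n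

open Polynomial Finset ComplexConjugate

namespace Polynomial

theorem wronskian_mul {R : Type*} [CommRing R] (a b c d : R[X]) :
    wronskian (a * b) (c * d) = wronskian a c * (b * d) + a * c * wronskian b d := by
  simp only [wronskian, derivative_mul]
  ring

theorem wronskian_prod {R ι : Type*} [CommRing R] [DecidableEq ι] (s : Finset ι)
    (f g : ι → R[X]) :
    wronskian (∏ i ∈ s, f i) (∏ i ∈ s, g i) =
      ∑ i ∈ s, wronskian (f i) (g i) * ∏ j ∈ s.erase i, (f j * g j) := by
  induction s using Finset.induction_on with
  | empty => simp [wronskian]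
  | insert a s ha ih =>
    rw [prod_insert ha, prod_insert ha, wronskian_mul, ih, sum_insert ha, erase_insert ha,
      prod_mul_distrib, mul_sum]
    congr 1
    refine sum_congr rfl fun i hi => ?_
    rw [erase_insert_of_ne (ne_of_mem_of_not_mem hi ha).symm,
      prod_insert fun h => ha (mem_of_mem_erase h)]
    ring

theorem reflect_eq_X_pow_mul_reverse {R : Type*} [Semiring R] {p : R[X]} {N : ℕ}
    (hN : p.natDegree ≤ N) : reflect N p = X ^ (N - p.natDegree) * reverse p := by
  have := reflect_mul p 1 le_rfl (natDegree_one.trans_le (Nat.zero_le (N - p.natDegree)))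
  rwa [mul_one, Nat.add_sub_cancel' hN, reflect_one, ← X_pow_mul] at this

theorem reverse_one {R : Type*} [Semiring R] : (1 : R[X]).reverse = 1 := by
  simpa using reverse_C (1 : R)

theorem reverse_X {R : Type*} [Semiring R] : (X : R[X]).reverse = 1 := by
  simpa [reverse_one] using reverse_mul_X (1 : R[X])

theorem roots_reverse_X_sub_C {K : Type*} [Field K] {a : K} (ha : a ≠ 0) :
    (X - C a).reverse.roots = {a⁻¹} := by
  have : (X - C a).reverse = C (-a) * (X - C a⁻¹) := by
    rw [sub_eq_add_neg, ← C_neg, reverse_add_C, reverse_X, mul_sub, ← C_mul,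
      neg_mul, mul_inv_cancel₀ ha]
    simp only [map_neg, natDegree_X, pow_one, neg_mul, map_one, sub_neg_eq_add]
    ring
  rw [this, roots_C_mul _ (neg_ne_zero.mpr ha), roots_X_sub_C]

theorem roots_reverse_prod_X_sub_C {K : Type*} [Field K] [DecidableEq K] (s : Multiset K) :
    (s.map (X - C ·)).prod.reverse.roots = (s.filter (· ≠ 0)).map (·⁻¹) := by
  induction s using Multiset.induction_on with
  | empty => simp [reverse_one]
  | cons a s ih =>
    have hs : (s.map (X - C ·)).prod.reverse ≠ 0 := reverse_eq_zero.not.mpr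
      (monic_multiset_prod_of_monic _ _ fun b _ => monic_X_sub_C b).ne_zero
    rw [Multiset.map_cons, Multiset.prod_cons, reverse_mul_of_domain,
      roots_mul (mul_ne_zero (reverse_eq_zero.not.mpr (X_sub_C_ne_zero a)) hs), ih]
    by_cases ha : a = 0
    · simp [ha, reverse_X]
    · rw [roots_reverse_X_sub_C ha, Multiset.filter_cons_of_pos (p := (· ≠ 0)) _ ha,
        Multiset.map_cons, Multiset.singleton_add]

theorem roots_reverse {K : Type*} [Field K] [IsAlgClosed K] [DecidableEq K] (p : K[X]) :
    p.reverse.roots = (p.roots.filter (· ≠ 0)).map (·⁻¹) := by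
  rcases eq_or_ne p 0 with rfl | hp
  · simp
  conv_lhs => rw [← C_leadingCoeff_mul_prod_multiset_X_sub_C
    (IsAlgClosed.splits p).natDegree_eq_card_roots.symm]
  rw [reverse_mul_of_domain, reverse_C, roots_C_mul _ (leadingCoeff_ne_zero.mpr hp),
    roots_reverse_prod_X_sub_C]

end Polynomial

theorem Multiset.two_mul_card_filter_norm_lt_one {M : Multiset ℂ} {k : ℕ}
    (hM : M = replicate k 0 + ((M.map conj).filter (· ≠ 0)).map (·⁻¹))
    (hcirc : ∀ w ∈ M, ‖w‖ ≠ 1) :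
    2 * card (M.filter (‖·‖ < 1)) = k + card M := by
  have hin : card (M.filter (‖·‖ < 1)) = k + card (M.filter (1 < ‖·‖)) := by
    conv_lhs => rw [hM]
    rw [filter_add, filter_eq_self.mpr fun w hw => by simp [eq_of_mem_replicate hw], card_add,
      card_replicate]
    simp only [filter_map, card_map, filter_filter]
    congr 2
    refine filter_congr fun w _ => ?_
    rcases eq_or_ne w 0 with rfl | hw <;> simp [inv_lt_one_iff₀, *]
  have hout : card (M.filter (‖·‖ < 1)) + card (M.filter (1 < ‖·‖)) = card M := by
    conv_rhs => rw [← filter_add_not (‖·‖ < 1) M]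
    rw [card_add, filter_congr fun w hw => not_lt.trans (hcirc w hw).symm.le_iff_lt]
  omega

/-- `p z = z ^ N * conj (p (1 / conj z))`, read as an identity of coefficients. The degree bound
makes `reflect N` the reversal of the coefficient list of length `N + 1`. -/
def IsSelfInversive (N : ℕ) (p : ℂ[X]) : Prop :=
  p.natDegree ≤ N ∧ reflect N (p.map (starRingEnd ℂ)) = p

namespace IsSelfInversive

variable {M N : ℕ} {p q : ℂ[X]}

theorem zero : IsSelfInversive N 0 := by
  simp [IsSelfInversive]

theorem one : IsSelfInversive 0 1 := by
  simp [IsSelfInversive]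

theorem add (hp : IsSelfInversive N p) (hq : IsSelfInversive N q) :
    IsSelfInversive N (p + q) :=
  ⟨natDegree_add_le_of_degree_le hp.1 hq.1, by rw [Polynomial.map_add, reflect_add, hp.2, hq.2]⟩

theorem mul (hp : IsSelfInversive M p) (hq : IsSelfInversive N q) :
    IsSelfInversive (M + N) (p * q) := by
  refine ⟨natDegree_mul_le.trans (add_le_add hp.1 hq.1), ?_⟩
  rw [Polynomial.map_mul, reflect_mul _ _ ((natDegree_map _).trans_le hp.1)
    ((natDegree_map _).trans_le hq.1), hp.2, hq.2]

theorem ofReal_mul (r : ℝ) (hp : IsSelfInversive N p) : IsSelfInversive N (C (r : ℂ) * p) := by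
  refine ⟨(natDegree_C_mul_le _ _).trans hp.1, ?_⟩
  rw [Polynomial.map_mul, map_C, Complex.conj_ofReal, reflect_C_mul, hp.2]

theorem sum {ι : Type*} {s : Finset ι} {f : ι → ℂ[X]} (hf : ∀ i ∈ s, IsSelfInversive N (f i)) :
    IsSelfInversive N (∑ i ∈ s, f i) :=
  Finset.sum_induction f _ (fun _ _ => add) zero hf

theorem prod {ι : Type*} {s : Finset ι} {f : ι → ℂ[X]} {d : ι → ℕ}
    (hf : ∀ i ∈ s, IsSelfInversive (d i) (f i)) :
    IsSelfInversive (∑ i ∈ s, d i) (∏ i ∈ s, f i) := by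
  classical
  induction s using Finset.induction_on with
  | empty => simpa using one
  | insert a s ha ih =>
    rw [sum_insert ha, prod_insert ha]
    exact (hf a (mem_insert_self a s)).mul (ih fun i hi => hf i (mem_insert_of_mem hi))

theorem one_sub_C_mul_X_mul_X_sub_C (a : ℂ) :
    IsSelfInversive 2 ((1 - C (conj a) * X) * (X - C a)) := by
  refine ⟨by compute_degree, ?_⟩
  have hmap : ((1 - C (conj a) * X) * (X - C a)).map (starRingEnd ℂ) =
      (1 - C a * X) * (X - C (conj a)) := by
    simp
  have hX : reflect 1 (X : ℂ[X]) = 1 := by simp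
  rw [hmap, show 2 = 1 + 1 from rfl, reflect_mul _ _ (by compute_degree) (by compute_degree)]
  simp only [reflect_sub, reflect_one, pow_one, reflect_C_mul, hX, mul_one, reflect_C]
  ring

theorem two_mul_card_roots_norm_lt_one (hp : IsSelfInversive N p) (hp0 : p ≠ 0)
    (hcirc : ∀ z : ℂ, ‖z‖ = 1 → p.eval z ≠ 0) :
    2 * Multiset.card (p.roots.filter (‖·‖ < 1)) = N := by
  classical
  have hdeg : (p.map (starRingEnd ℂ)).natDegree = p.natDegree := natDegree_map _
  have hroots : p.roots = Multiset.replicate (N - p.natDegree) 0 +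
      ((p.roots.map conj).filter (· ≠ 0)).map (·⁻¹) := by
    conv_lhs => rw [← hp.2]
    rw [reflect_eq_X_pow_mul_reverse (hdeg.trans_le hp.1), hdeg, roots_mul, roots_X_pow,
      roots_reverse, (IsAlgClosed.splits p).roots_map_of_injective (starRingEnd ℂ).injective,
      Multiset.nsmul_singleton]
    exact mul_ne_zero (pow_ne_zero _ X_ne_zero) (reverse_eq_zero.not.mpr (map_ne_zero hp0))
  have := Multiset.two_mul_card_filter_norm_lt_one hroots fun w hw h1 =>
    hcirc w h1 (mem_roots'.mp hw).2
  have hcard := (IsAlgClosed.splits p).natDegree_eq_card_roots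
  have hN := hp.1
  omega

end IsSelfInversive

theorem zeroOrderAt_eval_mul {p : ℂ[X]} (hp : p ≠ 0) {g h : ℂ → ℂ} {z : ℂ}
    (hh : AnalyticAt ℂ h z) (hhz : h z ≠ 0) (hg : ∀ᶠ w in nhds z, g w = p.eval w * h w) :
    ZeroOrderAt g z (p.rootMultiplicity z) := by
  have hpS := pow_mul_divByMonic_rootMultiplicity_eq p z
  set m := p.rootMultiplicity z
  set S := p /ₘ (X - C z) ^ m
  refine ⟨fun w => S.eval w * h w, (S.differentiable.analyticAt z).mul hh,
    mul_ne_zero (eval_divByMonic_pow_rootMultiplicity_ne_zero z hp) hhz, hg.mono fun w hw => ?_⟩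
  rw [hw, ← hpS]
  simp only [eval_mul, eval_pow, eval_sub, eval_X, eval_C, mul_assoc]

open Classical in
theorem countZerosIn_eval_mul {U : Set ℂ} (hU : IsOpen U) {p : ℂ[X]} (hp : p ≠ 0) {g h : ℂ → ℂ}
    (hh : ∀ z ∈ U, AnalyticAt ℂ h z ∧ h z ≠ 0) (hg : Set.EqOn g (fun z => p.eval z * h z) U) :
    CountZerosIn g U (Multiset.card (p.roots.filter (· ∈ U))) := by
  refine ⟨p.roots.toFinset.filter (· ∈ U), p.rootMultiplicity, fun z => ?_, fun z hz => ?_, ?_⟩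
  · rw [mem_filter, Multiset.mem_toFinset, mem_roots hp, IsRoot.def]
    constructor
    · rintro ⟨hpz, hzU⟩
      exact ⟨hzU, (hg hzU).trans (by simp [hpz])⟩
    · rintro ⟨hzU, hgz⟩
      replace hgz : p.eval z * h z = 0 := (hg hzU).symm.trans hgz
      exact ⟨(mul_eq_zero.mp hgz).resolve_right (hh z hzU).2, hzU⟩
  · have hzU := (mem_filter.mp hz).2
    exact zeroOrderAt_eval_mul hp (hh z hzU).1 (hh z hzU).2
      (Filter.eventually_of_mem (hU.mem_nhds hzU) hg)
  · rw [← Multiset.toFinset_sum_count_eq, Multiset.toFinset_filter]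
    exact sum_congr rfl fun z hz => by
      rw [Multiset.count_filter_of_pos (mem_filter.mp hz).2, count_roots]

theorem wronskian_one_sub_C_mul_X_X_sub_C (a : ℂ) :
    wronskian (1 - C (conj a) * X) (X - C a) = C ((1 - ‖a‖ ^ 2 : ℝ) : ℂ) := by
  rw [wronskian, derivative_X_sub_C, derivative_sub, derivative_one, derivative_C_mul_X,
    Complex.ofReal_sub, Complex.ofReal_one, Complex.ofReal_pow, ← Complex.conj_mul', C_sub, C_mul,
    C_1]
  ring

theorem eval_one_sub_C_mul_X_mul_X_sub_C {z : ℂ} (hz : ‖z‖ = 1) (a : ℂ) :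
    ((1 - C (conj a) * X) * (X - C a)).eval z = z * ((‖z - a‖ ^ 2 : ℝ) : ℂ) := by
  have hzz : z * conj z = 1 := by simp [Complex.mul_conj', hz]
  simp only [eval_mul, eval_sub, eval_one, eval_C, eval_X, Complex.ofReal_pow,
    ← Complex.mul_conj', map_sub]
  linear_combination (a - z) * hzz

section Blaschke

variable {ι : Type*} [Fintype ι] (α : ι → ℂ)

def blaschkeNum : ℂ[X] := ∏ j, (X - C (α j))

def blaschkeDen : ℂ[X] := ∏ j, (1 - C (conj (α j)) * X)

theorem wronskian_blaschkeDen_blaschkeNum [DecidableEq ι] :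
    wronskian (blaschkeDen α) (blaschkeNum α) = ∑ j, C ((1 - ‖α j‖ ^ 2 : ℝ) : ℂ) *
      ∏ k ∈ univ.erase j, ((1 - C (conj (α k)) * X) * (X - C (α k))) := by
  simp only [blaschkeDen, blaschkeNum, wronskian_prod, wronskian_one_sub_C_mul_X_X_sub_C]

theorem isSelfInversive_wronskian_blaschke :
    IsSelfInversive (2 * (Fintype.card ι - 1)) (wronskian (blaschkeDen α) (blaschkeNum α)) := by
  classical
  rw [wronskian_blaschkeDen_blaschkeNum]
  refine IsSelfInversive.sum fun j _ => IsSelfInversive.ofReal_mul _ ?_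
  have := IsSelfInversive.prod (s := univ.erase j) (d := fun _ => 2)
    fun k _ => IsSelfInversive.one_sub_C_mul_X_mul_X_sub_C (α k)
  rwa [sum_const, card_erase_of_mem (mem_univ j), card_univ, smul_eq_mul, mul_comm] at this

theorem eval_wronskian_blaschke_of_norm_eq_one [DecidableEq ι] {z : ℂ} (hz : ‖z‖ = 1) :
    (wronskian (blaschkeDen α) (blaschkeNum α)).eval z = z ^ (Fintype.card ι - 1) *
      ((∑ j, (1 - ‖α j‖ ^ 2) * ∏ k ∈ univ.erase j, ‖z - α k‖ ^ 2 : ℝ) : ℂ) := by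
  rw [wronskian_blaschkeDen_blaschkeNum, eval_finsetSum, Complex.ofReal_sum, mul_sum]
  refine sum_congr rfl fun j _ => ?_
  rw [eval_mul, eval_C, eval_prod,
    prod_congr rfl fun k _ => eval_one_sub_C_mul_X_mul_X_sub_C hz (α k), prod_mul_distrib,
    prod_const, card_erase_of_mem (mem_univ j), card_univ]
  push_cast
  ring

theorem eval_wronskian_blaschke_ne_zero [Nonempty ι] {α : ι → ℂ} (hα : ∀ j, ‖α j‖ < 1) {z : ℂ}
    (hz : ‖z‖ = 1) : (wronskian (blaschkeDen α) (blaschkeNum α)).eval z ≠ 0 := by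
  classical
  have hz0 : z ≠ 0 := by rintro rfl; simp at hz
  rw [eval_wronskian_blaschke_of_norm_eq_one α hz]
  refine mul_ne_zero (pow_ne_zero _ hz0) (Complex.ofReal_ne_zero.mpr (ne_of_gt ?_))
  refine sum_pos (fun j _ => mul_pos ?_ (prod_pos fun k _ => ?_)) univ_nonempty
  · nlinarith [hα j, norm_nonneg (α j)]
  · have : z ≠ α k := fun h => (hα k).ne (h ▸ hz)
    positivity [sub_ne_zero.mpr this]

theorem wronskian_blaschke_ne_zero [Nonempty ι] {α : ι → ℂ} (hα : ∀ j, ‖α j‖ < 1) :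
    wronskian (blaschkeDen α) (blaschkeNum α) ≠ 0 := fun h =>
  eval_wronskian_blaschke_ne_zero hα norm_one (by rw [h, eval_zero])

theorem eval_blaschkeDen_ne_zero {α : ι → ℂ} (hα : ∀ j, ‖α j‖ < 1) {z : ℂ} (hz : ‖z‖ ≤ 1) :
    (blaschkeDen α).eval z ≠ 0 := by
  rw [blaschkeDen, eval_prod, prod_ne_zero_iff]
  intro j _
  have hlt : ‖conj (α j) * z‖ < 1 := by
    rw [norm_mul, Complex.norm_conj]
    nlinarith [hα j, norm_nonneg (α j), norm_nonneg z]
  simpa [sub_eq_zero] using fun h : 1 = conj (α j) * z => hlt.ne (by rw [← h, norm_one])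

theorem hasDerivAt_of_eq_blaschke {lam : ℂ} {B : ℂ → ℂ}
    (hB : ∀ z, B z = lam * ∏ j, (z - α j) / (1 - conj (α j) * z)) {z : ℂ}
    (hz : (blaschkeDen α).eval z ≠ 0) :
    HasDerivAt B (lam * ((wronskian (blaschkeDen α) (blaschkeNum α)).eval z /
      (blaschkeDen α).eval z ^ 2)) z := by
  have hBPQ : B = fun w => lam * ((blaschkeNum α).eval w / (blaschkeDen α).eval w) := by
    funext w
    simp [hB w, blaschkeNum, blaschkeDen, eval_prod, prod_div_distrib]
  rw [hBPQ]
  refine ((((blaschkeNum α).hasDerivAt z).div ((blaschkeDen α).hasDerivAt z) hz).const_mul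
    lam).congr_deriv ?_
  simp only [wronskian, eval_sub, eval_mul]
  ring

theorem countZerosIn_deriv_of_eq_blaschke [Nonempty ι] {α : ι → ℂ} (hα : ∀ j, ‖α j‖ < 1)
    {lam : ℂ} (hlam : lam ≠ 0) {B : ℂ → ℂ}
    (hB : ∀ z, B z = lam * ∏ j, (z - α j) / (1 - conj (α j) * z)) :
    CountZerosIn (deriv B) unitDisk (Fintype.card ι - 1) := by
  classical
  have hW0 := wronskian_blaschke_ne_zero hα
  have hden : ∀ z ∈ unitDisk, (blaschkeDen α).eval z ≠ 0 := fun z hz =>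
    eval_blaschkeDen_ne_zero hα (mem_ball_zero_iff.mp hz).le
  have hcount := countZerosIn_eval_mul (U := unitDisk) isOpen_ball hW0
    (g := deriv B) (h := fun z => lam / (blaschkeDen α).eval z ^ 2)
    (fun z hz => ⟨analyticAt_const.div ((blaschkeDen α).differentiable.analyticAt z |>.pow 2)
      (pow_ne_zero 2 (hden z hz)), div_ne_zero hlam (pow_ne_zero 2 (hden z hz))⟩)
    (fun z hz => by rw [(hasDerivAt_of_eq_blaschke α hB (hden z hz)).deriv]; ring)
  have hhalf := (isSelfInversive_wronskian_blaschke α).two_mul_card_roots_norm_lt_one hW0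
    fun z hz => eval_wronskian_blaschke_ne_zero hα hz
  have hdisk : (wronskian (blaschkeDen α) (blaschkeNum α)).roots.filter (· ∈ unitDisk) =
      (wronskian (blaschkeDen α) (blaschkeNum α)).roots.filter (‖·‖ < 1) :=
    Multiset.filter_congr fun z _ => mem_ball_zero_iff
  rwa [hdisk, show Multiset.card _ = Fintype.card ι - 1 by omega] at hcount

end Blaschke

/-- The derivative of a finite Blaschke product of order `n ≥ 1` has exactly `n - 1`
zeros in the open unit disk, counted with multiplicity. -/
theorem stmt9 (n : ℕ) (hn : 1 ≤ n) (B : ℂ → ℂ) (hB : IsBlaschkeOf n B) :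
    CountZerosIn (deriv B) unitDisk (n - 1) := by
  obtain ⟨lam, α, hlam, hα, hB⟩ := hB
  have : Nonempty (Fin n) := ⟨⟨0, hn⟩⟩
  simpa using countZerosIn_deriv_of_eq_blaschke hα (norm_ne_zero_iff.mp (hlam ▸ one_ne_zero)) hB
end
end

section
/- Let b₁ and b₂ be finite Blaschke products of the same order k ≥ 1 that identify the same points of the open unit disk: for all z, w ∈ 𝔻, b₁(z) = b₁(w) if and only if b₂(z) = b₂(w). Then there exists a conformal automorphism σ of 𝔻 (a finite Blaschke product of order 1) such that b₂(z) = σ(b₁(z)) for all z ∈ 𝔻. -/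
open Complex Metric

noncomputable section

/-!
Choose `v` in the disk that is not a critical value of `b₁`, so that its fiber `t = b₁⁻¹(v)`
consists of `k` distinct points of the disk. By hypothesis `b₂` takes a single value `c` on `t`;
since `b₂ = c` has exactly `k` solutions in the disk counted with multiplicity, they are the points
of `t`, each simple. Writing `φ_a(z) = (z - a) / (1 - conj a * z)`, the map `φ_v ∘ b₁` is a
unimodular multiple of the Blaschke product with zeros `t`: its numerator is `lam * num - v * den`
and its denominator is the reflection of that polynomial in the unit circle. The same holds for
`φ_c ∘ b₂`, so `φ_c ∘ b₂ = μ * φ_v ∘ b₁` with `‖μ‖ = 1`, and `σ = φ_c⁻¹ ∘ (μ * φ_v)` is a disk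
automorphism.
-/

open Polynomial ComplexConjugate

theorem norm_multiset_prod_map {𝕜 ι : Type*} [NormedField 𝕜] {s : Multiset ι} (f : ι → 𝕜) :
    ‖(s.map f).prod‖ = (s.map fun a => ‖f a‖).prod :=
  (map_multiset_prod (normHom : 𝕜 →*₀ ℝ) _).trans (by rw [Multiset.map_map]; rfl)

theorem norm_multiset_prod_map_le_one {𝕜 ι : Type*} [NormedField 𝕜] {s : Multiset ι} {f : ι → 𝕜}
    (hf : ∀ a ∈ s, ‖f a‖ ≤ 1) : ‖(s.map f).prod‖ ≤ 1 := by
  rw [norm_multiset_prod_map]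
  simpa using Multiset.prod_map_le_prod_map₀ _ (fun _ => (1 : ℝ)) (fun a _ => norm_nonneg (f a)) hf

namespace Blaschke

theorem sq_norm_one_sub_conj_mul_sub_sq_norm_sub (a z : ℂ) :
    ‖1 - conj a * z‖ ^ 2 - ‖z - a‖ ^ 2 = (1 - ‖a‖ ^ 2) * (1 - ‖z‖ ^ 2) := by
  simp only [← normSq_eq_norm_sq, normSq_apply, sub_re, sub_im, mul_re, mul_im, conj_re, conj_im,
    one_re, one_im]
  ring

section Factor

variable {a z : ℂ}

theorem norm_sub_lt_norm_one_sub_conj_mul (ha : ‖a‖ < 1) (hz : ‖z‖ < 1) :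
    ‖z - a‖ < ‖1 - conj a * z‖ := by
  have := sq_norm_one_sub_conj_mul_sub_sq_norm_sub a z
  have hpos : 0 < (1 - ‖a‖ ^ 2) * (1 - ‖z‖ ^ 2) := by
    apply mul_pos <;> nlinarith [norm_nonneg a, norm_nonneg z]
  exact lt_of_pow_lt_pow_left₀ 2 (norm_nonneg _) (by linarith)

theorem norm_one_sub_conj_mul_le_norm_sub (ha : ‖a‖ < 1) (hz : 1 ≤ ‖z‖) :
    ‖1 - conj a * z‖ ≤ ‖z - a‖ := by
  have := sq_norm_one_sub_conj_mul_sub_sq_norm_sub a z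
  have hneg : (1 - ‖a‖ ^ 2) * (1 - ‖z‖ ^ 2) ≤ 0 := by
    apply mul_nonpos_of_nonneg_of_nonpos <;> nlinarith [norm_nonneg a, norm_nonneg z]
  exact le_of_pow_le_pow_left₀ two_ne_zero (norm_nonneg _) (by linarith)

theorem one_sub_conj_mul_ne_zero (ha : ‖a‖ < 1) (hz : ‖z‖ ≤ 1) : 1 - conj a * z ≠ 0 := by
  refine sub_ne_zero.mpr fun h => ?_
  have : ‖conj a * z‖ < 1 := by
    rw [norm_mul, norm_conj]
    nlinarith [norm_nonneg a, norm_nonneg z]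
  simp [← h] at this

/-- The disk automorphism `φ_a`, which maps `a` to `0`. -/
def factor (a z : ℂ) : ℂ := (z - a) / (1 - conj a * z)

theorem norm_factor_lt_one (ha : ‖a‖ < 1) (hz : ‖z‖ < 1) : ‖factor a z‖ < 1 := by
  rw [factor, norm_div, div_lt_one (norm_pos_iff.mpr (one_sub_conj_mul_ne_zero ha hz.le))]
  exact norm_sub_lt_norm_one_sub_conj_mul ha hz

theorem factor_neg_factor (ha : ‖a‖ < 1) (hz : ‖z‖ ≤ 1) : factor (-a) (factor a z) = z := by
  have hd := one_sub_conj_mul_ne_zero ha hz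
  have ha' := one_sub_conj_mul_ne_zero ha ha.le
  have hnum : (z - a) / (1 - conj a * z) - -a = z * (1 - conj a * a) / (1 - conj a * z) := by
    rw [eq_div_iff hd, sub_mul, div_mul_cancel₀ _ hd]
    ring
  have hden : 1 - conj (-a) * ((z - a) / (1 - conj a * z)) =
      (1 - conj a * a) / (1 - conj a * z) := by
    rw [map_neg]
    field_simp
    ring
  rw [factor, factor, hnum, hden, div_div_div_cancel_right₀ hd, mul_div_cancel_right₀ _ ha']

theorem exists_factor_mul_factor_eq {μ b : ℂ} (hμ : ‖μ‖ = 1) (ha : ‖a‖ < 1) (hb : ‖b‖ < 1) :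
    ∃ lam c, ‖lam‖ = 1 ∧ ‖c‖ < 1 ∧
      ∀ z, ‖z‖ ≤ 1 → factor b (μ * factor a z) = lam * factor c z := by
  have hμμ : μ * conj μ = 1 := by
    rw [mul_conj, normSq_eq_norm_sq, hμ]
    norm_num
  obtain ⟨a₀, ha₀⟩ : ∃ a₀, a₀ = -(conj μ * b) := ⟨_, rfl⟩
  have ha₀_lt : ‖a₀‖ < 1 := by simpa [ha₀, hμ] using hb
  obtain ⟨E, hE⟩ : ∃ E, E = 1 - conj a₀ * a := ⟨_, rfl⟩
  -- the composite vanishes at `φ_{-a}(conj μ * b) = (a - a₀) / conj E`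
  have hE0 : E ≠ 0 := hE ▸ one_sub_conj_mul_ne_zero ha₀_lt ha.le
  have hc : ‖(a - a₀) / conj E‖ < 1 := by
    rw [norm_div, norm_conj, div_lt_one (norm_pos_iff.mpr hE0), hE]
    exact norm_sub_lt_norm_one_sub_conj_mul ha₀_lt ha
  refine ⟨μ * conj E / E, (a - a₀) / conj E, ?_, hc, fun z hz => ?_⟩
  · rw [norm_div, norm_mul, norm_conj, hμ, one_mul, div_self (norm_ne_zero_iff.mpr hE0)]
  set c := (a - a₀) / conj E
  have hD := one_sub_conj_mul_ne_zero ha hz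
  have hcE : c * conj E = a - a₀ := div_mul_cancel₀ _ ((_root_.map_ne_zero _).mpr hE0)
  have hcE' : conj c * E = conj a - conj a₀ := by simpa using congrArg conj hcE
  have hnum : μ * ((z - a) / (1 - conj a * z)) - b =
      μ * conj E * (z - c) / (1 - conj a * z) := by
    rw [eq_div_iff hD, sub_mul, mul_assoc, div_mul_cancel₀ _ hD]
    have hEc : conj E = 1 + conj μ * b * conj a := by simp [hE, ha₀]
    linear_combination μ * hcE - μ * z * hEc - μ * ha₀ + (b - b * conj a * z) * hμμ
  have hden : 1 - conj b * (μ * ((z - a) / (1 - conj a * z))) =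
      E * (1 - conj c * z) / (1 - conj a * z) := by
    rw [eq_div_iff hD, sub_mul, one_mul, mul_assoc, mul_assoc, div_mul_cancel₀ _ hD]
    have hā₀ : conj a₀ = -(μ * conj b) := by simp [ha₀]
    linear_combination z * hcE' - hE + (a - z) * hā₀
  rw [factor, factor, factor, hnum, hden, div_div_div_cancel_right₀ hD, mul_div_mul_comm]

theorem isBlaschkeOf_one {lam : ℂ} (hlam : ‖lam‖ = 1) (ha : ‖a‖ < 1) :
    IsBlaschkeOf 1 (fun z => lam * factor a z) :=
  ⟨lam, fun _ => a, hlam, fun _ => ha, fun z => by simp [factor]⟩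

end Factor

section Product

variable {s : Multiset ℂ} {z : ℂ}

def product (s : Multiset ℂ) (z : ℂ) : ℂ := (s.map fun a => factor a z).prod

theorem _root_.IsBlaschkeOf.exists_eq_mul_product {n : ℕ} {B : ℂ → ℂ} (hB : IsBlaschkeOf n B) :
    ∃ (lam : ℂ) (s : Multiset ℂ), ‖lam‖ = 1 ∧ Multiset.card s = n ∧ (∀ a ∈ s, ‖a‖ < 1) ∧
      B = fun z => lam * product s z := by
  obtain ⟨lam, α, hlam, hα, hB⟩ := hB
  refine ⟨lam, Finset.univ.val.map α, hlam, by simp, by simpa using hα, funext fun z => ?_⟩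
  rw [hB, product, Multiset.map_map, Finset.prod_map_val]
  rfl

theorem norm_mul_product_le_one {lam : ℂ} (hlam : ‖lam‖ = 1) (hs : ∀ a ∈ s, ‖a‖ < 1)
    (hz : ‖z‖ < 1) : ‖lam * product s z‖ ≤ 1 := by
  rw [norm_mul, hlam, one_mul]
  exact norm_multiset_prod_map_le_one fun a ha => (norm_factor_lt_one (hs a ha) hz).le

theorem norm_mul_product_lt_one {lam : ℂ} (hlam : ‖lam‖ = 1) (hs : ∀ a ∈ s, ‖a‖ < 1)
    (hs0 : s ≠ 0) (hz : ‖z‖ < 1) : ‖lam * product s z‖ < 1 := by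
  obtain ⟨a, ha⟩ := Multiset.exists_mem_of_ne_zero hs0
  obtain ⟨t, rfl⟩ := Multiset.exists_cons_of_mem ha
  simp only [Multiset.mem_cons, forall_eq_or_imp] at hs
  rw [norm_mul, hlam, one_mul, product, Multiset.map_cons, Multiset.prod_cons, norm_mul]
  exact mul_lt_one_of_nonneg_of_lt_one_left (norm_nonneg _) (norm_factor_lt_one hs.1 hz)
    (norm_multiset_prod_map_le_one fun b hb => (norm_factor_lt_one (hs.2 b hb) hz).le)

def num (s : Multiset ℂ) : ℂ[X] := (s.map fun a => X - C a).prod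

def den (s : Multiset ℂ) : ℂ[X] := (s.map fun a => 1 - C (conj a) * X).prod

theorem eval_num : (num s).eval z = (s.map fun a => z - a).prod := by
  simp [num, eval_multiset_prod]

theorem eval_den : (den s).eval z = (s.map fun a => 1 - conj a * z).prod := by
  simp [den, eval_multiset_prod]

theorem product_eq_eval_div : product s z = (num s).eval z / (den s).eval z := by
  rw [product, eval_num, eval_den, ← Multiset.prod_map_div]
  rfl

theorem eval_num_eq_zero_iff : (num s).eval z = 0 ↔ z ∈ s := by
  simp [eval_num, Multiset.prod_eq_zero_iff, sub_eq_zero]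

theorem eval_den_ne_zero (hs : ∀ a ∈ s, ‖a‖ < 1) (hz : ‖z‖ ≤ 1) : (den s).eval z ≠ 0 := by
  rw [eval_den, Ne, Multiset.prod_eq_zero_iff, Multiset.mem_map, not_exists]
  exact fun a ⟨ha, h⟩ => one_sub_conj_mul_ne_zero (hs a ha) hz h

theorem natDegree_num (s : Multiset ℂ) : (num s).natDegree = Multiset.card s :=
  natDegree_multiset_prod_X_sub_C_eq_card s

theorem monic_num (s : Multiset ℂ) : (num s).Monic :=
  monic_multiset_prod_of_monic _ _ fun a _ => monic_X_sub_C a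

theorem reflect_map_conj_num (s : Multiset ℂ) :
    reflect (Multiset.card s) ((num s).map (starRingEnd ℂ)) = den s := by
  induction s using Multiset.induction_on with
  | empty => simp [num, den]
  | cons a s ih =>
    rw [num, Multiset.map_cons, Multiset.prod_cons, ← num, Polynomial.map_mul,
      Multiset.card_cons, add_comm,
      reflect_mul _ _ (natDegree_map_le.trans (natDegree_X_sub_C_le _))
        (by rw [natDegree_map, natDegree_num]), ih]
    simp [den]

theorem reflect_map_conj_den (s : Multiset ℂ) :
    reflect (Multiset.card s) ((den s).map (starRingEnd ℂ)) = num s := by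
  rw [← reflect_map_conj_num, reflect_map, reflect_reflect, Polynomial.map_map]
  simp

theorem norm_coeff_den_le_one (hs : ∀ a ∈ s, ‖a‖ < 1) :
    ‖(den s).coeff (Multiset.card s)‖ ≤ 1 := by
  rw [← reflect_map_conj_num, coeff_reflect, revAt_le le_rfl, Nat.sub_self, coeff_map,
    norm_conj, coeff_zero_eq_eval_zero, eval_num]
  exact norm_multiset_prod_map_le_one fun a ha => by simpa using (hs a ha).le

theorem isCoprime_num_den (hs : ∀ a ∈ s, ‖a‖ < 1) : IsCoprime (num s) (den s) := by
  refine (isCoprime_iff_aeval_ne_zero_of_isAlgClosed ℂ ℂ _ _).mpr fun z => ?_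
  simp only [coe_aeval_eq_eval]
  by_cases hz : z ∈ s
  · exact Or.inr (eval_den_ne_zero hs (hs z hz).le)
  · exact Or.inl (mt eval_num_eq_zero_iff.mp hz)

theorem wronskian_num_den_ne_zero (hs : ∀ a ∈ s, ‖a‖ < 1) (hs0 : s ≠ 0) :
    wronskian (num s) (den s) ≠ 0 := by
  rw [Ne, (isCoprime_num_den hs).wronskian_eq_zero_iff, not_and]
  intro h
  rw [derivative_eq_zero, natDegree_num, Multiset.card_eq_zero] at h
  exact absurd h hs0

end Product

section FiberPoly

variable {s : Multiset ℂ} {lam v z : ℂ}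

/-- `lam * product s z - v` with the denominator cleared: its roots are the fiber over `v`. -/
def fiberPoly (lam v : ℂ) (s : Multiset ℂ) : ℂ[X] := C lam * num s - C v * den s

theorem eval_fiberPoly :
    (fiberPoly lam v s).eval z = lam * (num s).eval z - v * (den s).eval z := by
  simp [fiberPoly]

theorem isRoot_fiberPoly_iff (hs : ∀ a ∈ s, ‖a‖ < 1) (hz : ‖z‖ < 1) :
    (fiberPoly lam v s).IsRoot z ↔ lam * product s z = v := by
  rw [IsRoot, eval_fiberPoly, product_eq_eval_div, ← mul_div_assoc,
    div_eq_iff (eval_den_ne_zero hs hz.le), sub_eq_zero]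

theorem isRoot_wronskian_of_one_lt_rootMultiplicity (hlam : lam ≠ 0)
    (h : 1 < rootMultiplicity z (fiberPoly lam v s)) : (wronskian (num s) (den s)).IsRoot z := by
  have hN : fiberPoly lam v s ≠ 0 := by
    rintro hN
    simp [hN] at h
  obtain ⟨h₀, h₁⟩ := (one_lt_rootMultiplicity_iff_isRoot hN).mp h
  simp only [IsRoot, fiberPoly, derivative_sub, derivative_C_mul, eval_sub,
    eval_mul, eval_C] at h₀ h₁
  refine (mul_eq_zero.mp ?_).resolve_left hlam
  rw [wronskian, eval_sub, eval_mul, eval_mul]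
  linear_combination (derivative (den s)).eval z * h₀ - (den s).eval z * h₁

variable (hlam : ‖lam‖ = 1) (hv : ‖v‖ < 1) (hs : ∀ a ∈ s, ‖a‖ < 1)
include hlam hv hs

theorem coeff_fiberPoly_card_ne_zero : (fiberPoly lam v s).coeff (Multiset.card s) ≠ 0 := by
  have hP : (num s).coeff (Multiset.card s) = 1 := by
    simpa [natDegree_num] using (monic_num s).coeff_natDegree
  rw [fiberPoly, coeff_sub, coeff_C_mul, coeff_C_mul, hP, mul_one, sub_ne_zero]
  intro h
  have : ‖v * (den s).coeff (Multiset.card s)‖ < 1 := by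
    rw [norm_mul]
    exact mul_lt_one_of_nonneg_of_lt_one_left (norm_nonneg _) hv (norm_coeff_den_le_one hs)
  rw [← h, hlam] at this
  exact this.false

theorem fiberPoly_ne_zero : fiberPoly lam v s ≠ 0 := fun h =>
  coeff_fiberPoly_card_ne_zero hlam hv hs (by rw [h, coeff_zero])

theorem natDegree_fiberPoly : (fiberPoly lam v s).natDegree = Multiset.card s := by
  refine le_antisymm ((natDegree_sub_le _ _).trans (max_le ?_ ?_))
    (le_natDegree_of_ne_zero (coeff_fiberPoly_card_ne_zero hlam hv hs))
  · exact (natDegree_C_mul_le _ _).trans (natDegree_num s).le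
  · refine (natDegree_C_mul_le _ _).trans ?_
    rw [← reflect_map_conj_num]
    exact natDegree_reflect_le.trans (by rw [natDegree_map, natDegree_num, max_self])

theorem card_roots_fiberPoly : Multiset.card (fiberPoly lam v s).roots = Multiset.card s :=
  IsAlgClosed.card_roots_eq_natDegree.trans (natDegree_fiberPoly hlam hv hs)

/-- Roots outside the disk are impossible since there `‖num s‖ ≥ ‖den s‖` while `‖v‖ < 1`. -/
theorem norm_lt_one_of_isRoot_fiberPoly (hz : (fiberPoly lam v s).IsRoot z) : ‖z‖ < 1 := by
  by_contra! h
  rw [IsRoot, eval_fiberPoly, sub_eq_zero] at hz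
  have hle : ‖(den s).eval z‖ ≤ ‖(num s).eval z‖ := by
    rw [eval_num, eval_den, norm_multiset_prod_map, norm_multiset_prod_map]
    exact Multiset.prod_map_le_prod_map₀ _ _ (fun _ _ => norm_nonneg _)
      fun a ha => norm_one_sub_conj_mul_le_norm_sub (hs a ha) h
  have hnum : ‖(num s).eval z‖ = ‖v‖ * ‖(den s).eval z‖ := by
    simpa [hlam] using congrArg norm hz
  have hden : (den s).eval z = 0 := by
    by_contra hd
    have := norm_pos_iff.mpr hd
    nlinarith
  have : z ∈ s := eval_num_eq_zero_iff.mp (by simpa [hden] using hnum)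
  exact (hs z this).not_ge h

theorem roots_fiberPoly_eq {t : Multiset ℂ} (ht : t.Nodup)
    (hcard : Multiset.card t = Multiset.card s) (hroot : ∀ x ∈ t, (fiberPoly lam v s).IsRoot x) :
    (fiberPoly lam v s).roots = t := by
  refine (Multiset.eq_of_le_of_card_le ((Multiset.le_iff_subset ht).mpr fun x hx => ?_)
    (by rw [card_roots_fiberPoly hlam hv hs, hcard])).symm
  exact (mem_roots (fiberPoly_ne_zero hlam hv hs)).mpr (hroot x hx)

theorem exists_factor_comp_eq_product_roots : ∃ κ, ‖κ‖ = 1 ∧ ∀ z, ‖z‖ < 1 →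
    factor v (lam * product s z) = κ * product (fiberPoly lam v s).roots z := by
  set t := (fiberPoly lam v s).roots
  set e := (fiberPoly lam v s).leadingCoeff
  have he : e ≠ 0 := leadingCoeff_ne_zero.mpr (fiberPoly_ne_zero hlam hv hs)
  have ht : ∀ a ∈ t, ‖a‖ < 1 := fun a ha =>
    norm_lt_one_of_isRoot_fiberPoly hlam hv hs (isRoot_of_mem_roots ha)
  have hcard : Multiset.card t = Multiset.card s := card_roots_fiberPoly hlam hv hs
  have hN : fiberPoly lam v s = C e * num t :=
    (C_leadingCoeff_mul_prod_multiset_X_sub_C IsAlgClosed.card_roots_eq_natDegree).symm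
  -- reflecting `hN` through the unit circle
  have hN' : C (conj lam) * den s - C (conj v) * num s = C (conj e) * den t := by
    have := congrArg (fun p => reflect (Multiset.card t) (p.map (starRingEnd ℂ))) hN
    simp only [fiberPoly, Polynomial.map_sub, Polynomial.map_mul, Polynomial.map_C,
      reflect_sub, reflect_C_mul, reflect_map_conj_num] at this
    rwa [hcard, reflect_map_conj_num, reflect_map_conj_den] at this
  have hlam' : lam * conj lam = 1 := by
    rw [mul_conj, normSq_eq_norm_sq, hlam]
    norm_num
  refine ⟨e / (lam * conj e), ?_, fun z hz => ?_⟩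
  · rw [norm_div, norm_mul, norm_conj, hlam, one_mul, div_self (norm_ne_zero_iff.mpr he)]
  have hD := eval_den_ne_zero hs hz.le
  have h₁ := congrArg (eval z) hN
  have h₂ := congrArg (eval z) hN'
  simp only [eval_fiberPoly, eval_sub, eval_mul, eval_C] at h₁ h₂
  have hnum :
      lam * ((num s).eval z / (den s).eval z) - v = e * (num t).eval z / (den s).eval z := by
    rw [eq_div_iff hD, sub_mul, mul_assoc, div_mul_cancel₀ _ hD, h₁]
  have hden : 1 - conj v * (lam * ((num s).eval z / (den s).eval z)) =
      lam * conj e * (den t).eval z / (den s).eval z := by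
    rw [eq_div_iff hD, sub_mul, one_mul, mul_assoc, mul_assoc, div_mul_cancel₀ _ hD]
    linear_combination lam * h₂ - (den s).eval z * hlam'
  rw [factor, product_eq_eval_div, product_eq_eval_div, hnum, hden,
    div_div_div_cancel_right₀ hD, mul_div_mul_comm]

end FiberPoly

theorem exists_nodup_roots_fiberPoly {lam : ℂ} {s : Multiset ℂ} (hlam : ‖lam‖ = 1)
    (hs : ∀ a ∈ s, ‖a‖ < 1) :
    ∃ v, ‖v‖ < 1 ∧ (fiberPoly lam v s).roots.Nodup := by
  rcases eq_or_ne s 0 with rfl | hs0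
  · exact ⟨0, by simp, by simp [fiberPoly, num, den]⟩
  have hlam0 : lam ≠ 0 := norm_ne_zero_iff.mp (by rw [hlam]; exact one_ne_zero)
  have hW := wronskian_num_den_ne_zero hs hs0
  -- the critical values of `lam * product s` are the only values with a multiple preimage
  obtain ⟨v, hv, hvT⟩ :=
    (infinite_of_mem_nhds (0 : ℂ) (ball_mem_nhds 0 one_pos)).exists_notMem_finset
      ((wronskian (num s) (den s)).roots.toFinset.image (lam * product s ·))
  rw [mem_ball_zero_iff] at hv
  refine ⟨v, hv, Multiset.nodup_iff_count_le_one.mpr fun z => ?_⟩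
  rw [count_roots]
  by_contra! hz
  have hroot : (fiberPoly lam v s).IsRoot z :=
    (rootMultiplicity_pos (fiberPoly_ne_zero hlam hv hs)).mp (by omega)
  refine hvT (Finset.mem_image.mpr ⟨z, ?_, ?_⟩)
  · exact Multiset.mem_toFinset.mpr ((mem_roots hW).mpr
      (isRoot_wronskian_of_one_lt_rootMultiplicity hlam0 hz))
  · exact (isRoot_fiberPoly_iff hs (norm_lt_one_of_isRoot_fiberPoly hlam hv hs hroot)).mp hroot

theorem exists_roots_fiberPoly_eq {lam₁ lam₂ : ℂ} {s₁ s₂ : Multiset ℂ} (hlam₁ : ‖lam₁‖ = 1)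
    (hlam₂ : ‖lam₂‖ = 1) (hs₁ : ∀ a ∈ s₁, ‖a‖ < 1) (hs₂ : ∀ a ∈ s₂, ‖a‖ < 1)
    (hcard : Multiset.card s₁ = Multiset.card s₂)
    (hsame : ∀ z w, ‖z‖ < 1 → ‖w‖ < 1 →
      lam₁ * product s₁ z = lam₁ * product s₁ w → lam₂ * product s₂ z = lam₂ * product s₂ w) :
    ∃ v c, ‖v‖ < 1 ∧ ‖c‖ < 1 ∧ (fiberPoly lam₂ c s₂).roots = (fiberPoly lam₁ v s₁).roots := by
  obtain ⟨v, hv, hnodup⟩ := exists_nodup_roots_fiberPoly hlam₁ hs₁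
  set t := (fiberPoly lam₁ v s₁).roots
  have ht : ∀ x ∈ t, ‖x‖ < 1 := fun x hx =>
    norm_lt_one_of_isRoot_fiberPoly hlam₁ hv hs₁ (isRoot_of_mem_roots hx)
  have hcard_t : Multiset.card t = Multiset.card s₂ :=
    (card_roots_fiberPoly hlam₁ hv hs₁).trans hcard
  have hb₁ : ∀ x ∈ t, lam₁ * product s₁ x = v := fun x hx =>
    (isRoot_fiberPoly_iff hs₁ (ht x hx)).mp (isRoot_of_mem_roots hx)
  obtain ⟨c, hc, hb₂⟩ : ∃ c, ‖c‖ < 1 ∧ ∀ x ∈ t, lam₂ * product s₂ x = c := by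
    rcases Multiset.empty_or_exists_mem t with ht0 | ⟨x₀, hx₀⟩
    · exact ⟨0, by simp, by simp [ht0]⟩
    have hs₂0 : s₂ ≠ 0 := by
      rintro rfl
      rw [Multiset.card_zero, Multiset.card_eq_zero] at hcard_t
      simp [hcard_t] at hx₀
    refine ⟨lam₂ * product s₂ x₀, norm_mul_product_lt_one hlam₂ hs₂ hs₂0 (ht x₀ hx₀),
      fun x hx => hsame x x₀ (ht x hx) (ht x₀ hx₀) ((hb₁ x hx).trans (hb₁ x₀ hx₀).symm)⟩
  exact ⟨v, c, hv, hc, roots_fiberPoly_eq hlam₂ hc hs₂ hnodup hcard_t fun x hx =>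
    (isRoot_fiberPoly_iff hs₂ (ht x hx)).mpr (hb₂ x hx)⟩

end Blaschke

open Blaschke in
theorem stmt12_general (k : ℕ) (b₁ b₂ : ℂ → ℂ)
    (hb₁ : IsBlaschkeOf k b₁) (hb₂ : IsBlaschkeOf k b₂)
    (hsame : ∀ z ∈ unitDisk, ∀ w ∈ unitDisk, (b₁ z = b₁ w ↔ b₂ z = b₂ w)) :
    ∃ σ : ℂ → ℂ, IsBlaschkeOf 1 σ ∧ ∀ z ∈ unitDisk, b₂ z = σ (b₁ z) := by
  obtain ⟨lam₁, s₁, hlam₁, hcard₁, hs₁, rfl⟩ := hb₁.exists_eq_mul_product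
  obtain ⟨lam₂, s₂, hlam₂, hcard₂, hs₂, rfl⟩ := hb₂.exists_eq_mul_product
  obtain ⟨v, c, hv, hc, hroots⟩ := exists_roots_fiberPoly_eq hlam₁ hlam₂ hs₁ hs₂
    (hcard₁.trans hcard₂.symm) fun z w hz hw =>
      (hsame z (mem_ball_zero_iff.mpr hz) w (mem_ball_zero_iff.mpr hw)).mp
  obtain ⟨κ₁, hκ₁, h₁⟩ := exists_factor_comp_eq_product_roots hlam₁ hv hs₁
  obtain ⟨κ₂, hκ₂, h₂⟩ := exists_factor_comp_eq_product_roots hlam₂ hc hs₂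
  have hκ₁0 : κ₁ ≠ 0 := norm_ne_zero_iff.mp (by rw [hκ₁]; exact one_ne_zero)
  obtain ⟨lam, a, hlam, ha, hσ⟩ := exists_factor_mul_factor_eq (μ := κ₂ / κ₁) (b := -c)
    (by rw [norm_div, hκ₁, hκ₂, div_one]) hv (by rwa [norm_neg])
  refine ⟨fun u => lam * factor a u, isBlaschkeOf_one hlam ha, fun z hz => ?_⟩
  rw [unitDisk, mem_ball_zero_iff] at hz
  calc lam₂ * product s₂ z = factor (-c) (factor c (lam₂ * product s₂ z)) :=
        (factor_neg_factor hc (norm_mul_product_le_one hlam₂ hs₂ hz)).symm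
    _ = factor (-c) (κ₂ / κ₁ * factor v (lam₁ * product s₁ z)) := by
        rw [h₁ z hz, h₂ z hz, hroots, ← mul_assoc, div_mul_cancel₀ _ hκ₁0]
    _ = lam * factor a (lam₁ * product s₁ z) := hσ _ (norm_mul_product_le_one hlam₁ hs₁ hz)

/-- Two finite Blaschke products of the same order identifying the same points of
the disk differ by a conformal automorphism of the disk. -/
theorem stmt12 (k : ℕ) (hk : 1 ≤ k) (b₁ b₂ : ℂ → ℂ)
    (hb₁ : IsBlaschkeOf k b₁) (hb₂ : IsBlaschkeOf k b₂)
    (hsame : ∀ z ∈ unitDisk, ∀ w ∈ unitDisk, (b₁ z = b₁ w ↔ b₂ z = b₂ w)) :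
    ∃ σ : ℂ → ℂ, IsBlaschkeOf 1 σ ∧ ∀ z ∈ unitDisk, b₂ z = σ (b₁ z) :=
  stmt12_general k b₁ b₂ hb₁ hb₂ hsame
end
end

section
/- Let f be analytic on the open unit disk 𝔻 and exactly n-to-one onto its image (every w ∈ f(𝔻) has exactly n preimages in 𝔻 counted with multiplicity, n ≥ 1), and suppose f = f̃₁ ∘ φ₁ = f̃₂ ∘ φ₂ where φ₁, φ₂ are finite Blaschke products of order n and f̃₁, f̃₂ are analytic and one-to-one on 𝔻. Then there exists a conformal automorphism σ of 𝔻 such that φ₂ = σ ∘ φ₁ and f̃₂ = f̃₁ ∘ σ⁻¹ on 𝔻; that is, the factorization of an exactly n-to-one analytic function into a univalent function composed with a finite Blaschke product is unique up to a conformal automorphism of the disk. -/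
open Complex Metric

noncomputable section

/-!
Since `f₁` and `f₂` are injective, `φ₁` and `φ₂` have the same fibres in the disk, so each
descends along the other: `φ₂ = s ∘ φ₁` and `φ₁ = t ∘ φ₂`. The descended maps are holomorphic:
near regular values they are compositions with local inverses of a Blaschke product, and at the
(isolated) critical values they are continuous by the open mapping theorem, so the singularity is
removable. A Blaschke product of positive order maps the disk onto itself, hence `s` and `t` are
mutually inverse holomorphic self-maps of the disk, and the Schwarz lemma shows that such a map is
a rotation composed with a single Blaschke factor.
-/

open Set Filter
open scoped Topology ComplexConjugate

def blaschkeFactor (a z : ℂ) : ℂ := (z - a) / (1 - conj a * z)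

lemma mem_unitDisk {z : ℂ} : z ∈ unitDisk ↔ ‖z‖ < 1 := mem_ball_zero_iff

section BlaschkeFactor

variable {a z : ℂ}

lemma sq_norm_one_sub_conj_mul_sub_sq_norm_sub (a z : ℂ) :
    ‖1 - conj a * z‖ ^ 2 - ‖z - a‖ ^ 2 = (1 - ‖a‖ ^ 2) * (1 - ‖z‖ ^ 2) := by
  simp only [← normSq_eq_norm_sq, normSq_apply, mul_re, mul_im, conj_re, conj_im, sub_re, sub_im,
    one_re, one_im]
  ring

lemma norm_sub_lt_norm_one_sub_conj_mul (ha : ‖a‖ < 1) (hz : ‖z‖ < 1) :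
    ‖z - a‖ < ‖1 - conj a * z‖ := by
  have h := sq_norm_one_sub_conj_mul_sub_sq_norm_sub a z
  have : 0 < (1 - ‖a‖ ^ 2) * (1 - ‖z‖ ^ 2) := by
    apply mul_pos <;> nlinarith [norm_nonneg a, norm_nonneg z]
  nlinarith [norm_nonneg (z - a), norm_nonneg (1 - conj a * z)]

lemma norm_one_sub_conj_mul_le_norm_sub (ha : ‖a‖ ≤ 1) (hz : 1 ≤ ‖z‖) :
    ‖1 - conj a * z‖ ≤ ‖z - a‖ := by
  have h := sq_norm_one_sub_conj_mul_sub_sq_norm_sub a z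
  have : (1 - ‖a‖ ^ 2) * (1 - ‖z‖ ^ 2) ≤ 0 := by
    apply mul_nonpos_of_nonneg_of_nonpos <;> nlinarith [norm_nonneg a, norm_nonneg z]
  nlinarith [norm_nonneg (z - a), norm_nonneg (1 - conj a * z)]

lemma one_sub_conj_mul_ne_zero (ha : ‖a‖ < 1) (hz : ‖z‖ < 1) : 1 - conj a * z ≠ 0 :=
  norm_pos_iff.mp ((norm_nonneg _).trans_lt (norm_sub_lt_norm_one_sub_conj_mul ha hz))

lemma norm_blaschkeFactor_lt_one (ha : ‖a‖ < 1) (hz : ‖z‖ < 1) : ‖blaschkeFactor a z‖ < 1 := by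
  rw [blaschkeFactor, norm_div, div_lt_one (norm_pos_iff.mpr (one_sub_conj_mul_ne_zero ha hz))]
  exact norm_sub_lt_norm_one_sub_conj_mul ha hz

lemma mapsTo_blaschkeFactor (ha : ‖a‖ < 1) : MapsTo (blaschkeFactor a) unitDisk unitDisk :=
  fun _ hz => mem_unitDisk.mpr (norm_blaschkeFactor_lt_one ha (mem_unitDisk.mp hz))

lemma differentiableAt_blaschkeFactor (ha : ‖a‖ < 1) (hz : ‖z‖ < 1) :
    DifferentiableAt ℂ (blaschkeFactor a) z :=
  (differentiableAt_id.sub_const a).div ((differentiableAt_const 1).sub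
    (differentiableAt_id.const_mul _)) (one_sub_conj_mul_ne_zero ha hz)

lemma differentiableOn_blaschkeFactor (ha : ‖a‖ < 1) :
    DifferentiableOn ℂ (blaschkeFactor a) unitDisk :=
  fun _ hz => (differentiableAt_blaschkeFactor ha (mem_unitDisk.mp hz)).differentiableWithinAt

lemma blaschkeFactor_self (a : ℂ) : blaschkeFactor a a = 0 := by simp [blaschkeFactor]

lemma blaschkeFactor_neg_zero (a : ℂ) : blaschkeFactor (-a) 0 = a := by simp [blaschkeFactor]

lemma blaschkeFactor_neg_blaschkeFactor (ha : ‖a‖ < 1) (hz : ‖z‖ < 1) :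
    blaschkeFactor (-a) (blaschkeFactor a z) = z := by
  have hD := one_sub_conj_mul_ne_zero ha hz
  have hD' := one_sub_conj_mul_ne_zero (norm_neg a ▸ ha) (norm_blaschkeFactor_lt_one ha hz)
  have e : blaschkeFactor a z * (1 - conj a * z) = z - a := div_mul_cancel₀ _ hD
  rw [blaschkeFactor, div_eq_iff hD', map_neg]
  linear_combination e

lemma blaschkeFactor_blaschkeFactor_neg (ha : ‖a‖ < 1) (hz : ‖z‖ < 1) :
    blaschkeFactor a (blaschkeFactor (-a) z) = z := by
  simpa using blaschkeFactor_neg_blaschkeFactor (a := -a) (by simpa using ha) hz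

end BlaschkeFactor

lemma norm_prod_blaschkeFactor_lt_one {n : ℕ} (hn : 0 < n) {α : Fin n → ℂ} (hα : ∀ j, ‖α j‖ < 1)
    {z : ℂ} (hz : ‖z‖ < 1) : ‖∏ j, blaschkeFactor (α j) z‖ < 1 := by
  obtain ⟨m, rfl⟩ := Nat.exists_eq_add_one_of_ne_zero hn.ne'
  rw [Fin.prod_univ_succ, norm_mul, norm_prod]
  refine mul_lt_one_of_nonneg_of_lt_one_left (norm_nonneg _)
    (norm_blaschkeFactor_lt_one (hα 0) hz) ?_
  exact Finset.prod_le_one (fun _ _ => norm_nonneg _)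
    fun j _ => (norm_blaschkeFactor_lt_one (hα _) hz).le

open Polynomial in
/-- Clearing denominators in `lam * ∏ j, blaschkeFactor (α j) z = w` gives a polynomial equation
of degree `n` in `z`: its leading coefficient `lam - w * ∏ j, -conj (α j)` has norm at least
`1 - ‖w‖ > 0`. -/
lemma exists_mul_prod_sub_eq_mul_prod_one_sub {n : ℕ} (hn : 0 < n) {lam w : ℂ} {α : Fin n → ℂ}
    (hlam : ‖lam‖ = 1) (hα : ∀ j, ‖α j‖ ≤ 1) (hw : ‖w‖ < 1) :
    ∃ z, lam * ∏ j, (z - α j) = w * ∏ j, (1 - conj (α j) * z) := by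
  set R : ℂ[X] := C lam * ∏ j, (X - C (α j)) - C w * ∏ j, (1 - C (conj (α j)) * X)
  have h₁ := coeff_prod_of_natDegree_le (s := Finset.univ) (fun j => X - C (α j)) 1
    fun j _ => (natDegree_X_sub_C_le _)
  have h₂ := coeff_prod_of_natDegree_le (s := Finset.univ)
    (fun j => (1 : ℂ[X]) - C (conj (α j)) * X) 1 fun j _ =>
      (natDegree_sub_le _ _).trans (max_le (by simp) ((natDegree_C_mul_le _ _).trans (by simp)))
  simp only [Finset.card_univ, Fintype.card_fin, mul_one] at h₁ h₂
  have hcoeff : R.coeff n = lam - w * ∏ j, -conj (α j) := by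
    simp [R, coeff_sub, coeff_C_mul, h₁, h₂, coeff_X, coeff_one]
  have hne : R.coeff n ≠ 0 := by
    rw [hcoeff, sub_ne_zero]
    intro h
    have : ‖w * ∏ j, -conj (α j)‖ < 1 := by
      rw [norm_mul, norm_prod]
      refine mul_lt_one_of_nonneg_of_lt_one_left (norm_nonneg _) hw ?_
      exact Finset.prod_le_one (fun _ _ => norm_nonneg _) fun j _ => by simpa using hα j
    rw [← h, hlam] at this
    exact lt_irrefl _ this
  obtain ⟨z, hz⟩ := Complex.exists_root
    ((WithBot.coe_lt_coe.mpr hn).trans_le (le_degree_of_ne_zero hne))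
  refine ⟨z, sub_eq_zero.mp ?_⟩
  simpa [R, eval_prod] using hz

lemma norm_lt_one_of_mul_prod_eq_mul_prod {n : ℕ} {lam w z : ℂ} {α : Fin n → ℂ} (hlam : ‖lam‖ = 1)
    (hα : ∀ j, ‖α j‖ < 1) (hw : ‖w‖ < 1)
    (h : lam * ∏ j, (z - α j) = w * ∏ j, (1 - conj (α j) * z)) : ‖z‖ < 1 := by
  by_contra! hz
  have hle : ‖∏ j, (1 - conj (α j) * z)‖ ≤ ‖∏ j, (z - α j)‖ := by
    simp only [norm_prod]
    exact Finset.prod_le_prod (fun _ _ => norm_nonneg _)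
      fun j _ => norm_one_sub_conj_mul_le_norm_sub (hα j).le hz
  have hnorm : ‖∏ j, (z - α j)‖ = ‖w‖ * ‖∏ j, (1 - conj (α j) * z)‖ := by
    simpa [hlam] using congrArg norm h
  have hzero : ∏ j, (z - α j) = 0 := by
    rw [← norm_le_zero_iff]
    nlinarith [mul_le_mul_of_nonneg_left hle (norm_nonneg w), norm_nonneg (∏ j, (z - α j))]
  obtain ⟨j, -, hj⟩ := Finset.prod_eq_zero_iff.mp hzero
  rw [sub_eq_zero.mp hj] at hz
  exact (hα j).not_ge hz

namespace IsBlaschkeOf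

variable {n : ℕ} {B : ℂ → ℂ}

lemma eq_blaschkeFactor (hB : IsBlaschkeOf n B) :
    ∃ (lam : ℂ) (α : Fin n → ℂ), ‖lam‖ = 1 ∧ (∀ j, ‖α j‖ < 1) ∧
      B = fun z => lam * ∏ j, blaschkeFactor (α j) z := by
  obtain ⟨lam, α, hlam, hα, hB⟩ := hB
  exact ⟨lam, α, hlam, hα, funext hB⟩

lemma differentiableOn (hB : IsBlaschkeOf n B) : DifferentiableOn ℂ B unitDisk := by
  obtain ⟨lam, α, -, hα, rfl⟩ := hB.eq_blaschkeFactor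
  intro z hz
  refine (DifferentiableAt.const_mul ?_ lam).differentiableWithinAt
  exact DifferentiableAt.fun_finsetProd fun j _ =>
    differentiableAt_blaschkeFactor (hα j) (mem_unitDisk.mp hz)

lemma mapsTo (hB : IsBlaschkeOf n B) (hn : 0 < n) : MapsTo B unitDisk unitDisk := by
  obtain ⟨lam, α, hlam, hα, rfl⟩ := hB.eq_blaschkeFactor
  intro z hz
  rw [mem_unitDisk, norm_mul, hlam, one_mul]
  exact norm_prod_blaschkeFactor_lt_one hn hα (mem_unitDisk.mp hz)

lemma surjOn (hB : IsBlaschkeOf n B) (hn : 0 < n) : SurjOn B unitDisk unitDisk := by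
  obtain ⟨lam, α, hlam, hα, rfl⟩ := hB.eq_blaschkeFactor
  intro w hw
  rw [mem_unitDisk] at hw
  obtain ⟨z, hz⟩ := exists_mul_prod_sub_eq_mul_prod_one_sub hn hlam (fun j => (hα j).le) hw
  have hz1 := norm_lt_one_of_mul_prod_eq_mul_prod hlam hα hw hz
  have hden : ∏ j, (1 - conj (α j) * z) ≠ 0 :=
    Finset.prod_ne_zero_iff.mpr fun j _ => one_sub_conj_mul_ne_zero (hα j) hz1
  refine ⟨z, mem_unitDisk.mpr hz1, ?_⟩
  simp only [blaschkeFactor, Finset.prod_div_distrib]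
  rw [← mul_div_assoc, hz, mul_div_cancel_right₀ _ hden]

end IsBlaschkeOf

section Descent

variable {U : Set ℂ} {φ ψ : ℂ → ℂ}

def descend (U : Set ℂ) (φ ψ : ℂ → ℂ) (w : ℂ) : ℂ := ψ (Function.invFunOn φ U w)

lemma descend_apply (hfib : ∀ z ∈ U, ∀ z' ∈ U, φ z = φ z' → ψ z = ψ z') {z : ℂ} (hz : z ∈ U) :
    descend U φ ψ (φ z) = ψ z :=
  hfib _ (Function.invFunOn_apply_mem hz) z hz (Function.invFunOn_apply_eq hz)

lemma continuousAt_descend (hU : IsOpen U) (hψ : ContinuousOn ψ U)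
    (hopen : ∀ O ⊆ U, IsOpen O → IsOpen (φ '' O))
    (hfib : ∀ z ∈ U, ∀ z' ∈ U, φ z = φ z' → ψ z = ψ z') {z₀ : ℂ} (hz₀ : z₀ ∈ U) :
    ContinuousAt (descend U φ ψ) (φ z₀) := by
  rw [ContinuousAt, descend_apply hfib hz₀]
  intro W hW
  obtain ⟨W', hW'W, hW', hz₀W'⟩ := _root_.mem_nhds_iff.mp hW
  have hO : IsOpen (U ∩ ψ ⁻¹' W') := hψ.isOpen_inter_preimage hU hW'
  refine mem_map.mpr
    (mem_of_superset ((hopen _ inter_subset_left hO).mem_nhds ⟨z₀, ⟨hz₀, hz₀W'⟩, rfl⟩) ?_)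
  rintro _ ⟨z, ⟨hz, hzW'⟩, rfl⟩
  exact hW'W (by rwa [descend_apply hfib hz])

/-- Near a regular value `φ z₀`, `descend U φ ψ` is `ψ` composed with a local inverse of `φ`. -/
lemma differentiableAt_descend_of_deriv_ne_zero
    (hfib : ∀ z ∈ U, ∀ z' ∈ U, φ z = φ z' → ψ z = ψ z') {z₀ : ℂ} (hU : U ∈ 𝓝 z₀)
    (hφ : AnalyticAt ℂ φ z₀) (hψ : DifferentiableAt ℂ ψ z₀) (hφ' : deriv φ z₀ ≠ 0) :
    DifferentiableAt ℂ (descend U φ ψ) (φ z₀) := by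
  have hs := hφ.hasStrictDerivAt
  set g := hs.localInverse φ (deriv φ z₀) z₀ hφ'
  have hg : HasStrictDerivAt g (deriv φ z₀)⁻¹ (φ z₀) := hs.to_localInverse hφ'
  have hgz : g (φ z₀) = z₀ := (hs.eventually_left_inverse hφ').self_of_nhds
  have hmem : ∀ᶠ w in 𝓝 (φ z₀), g w ∈ U :=
    hg.hasDerivAt.continuousAt.eventually_mem (by rwa [hgz])
  have heq : descend U φ ψ =ᶠ[𝓝 (φ z₀)] ψ ∘ g := by
    filter_upwards [hmem, hs.eventually_right_inverse hφ'] with w hwU hw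
    conv_lhs => rw [← hw]
    exact descend_apply hfib hwU
  rw [heq.differentiableAt_iff]
  exact (by rwa [hgz] : DifferentiableAt ℂ ψ (g (φ z₀))).comp _
    hg.hasDerivAt.differentiableAt

lemma eventually_deriv_ne_zero (hU : IsOpen U) (hφ : AnalyticOnNhd ℂ φ U)
    (hopen : ∀ O ⊆ U, IsOpen O → IsOpen (φ '' O)) {z₀ : ℂ} (hz₀ : z₀ ∈ U) :
    ∀ᶠ z in 𝓝[≠] z₀, deriv φ z ≠ 0 := by
  refine (hφ z₀ hz₀).deriv.eventually_eq_zero_or_eventually_ne_zero.resolve_left fun h => ?_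
  obtain ⟨r, hr, hball⟩ := Metric.eventually_nhds_iff_ball.mp (h.and (hU.eventually_mem hz₀))
  have hsub : ball z₀ r ⊆ U := fun z hz => (hball z hz).2
  have himage : φ '' ball z₀ r = {φ z₀} := by
    refine eq_singleton_iff_unique_mem.mpr ⟨⟨z₀, mem_ball_self hr, rfl⟩, ?_⟩
    rintro _ ⟨z, hz, rfl⟩
    exact isOpen_ball.is_const_of_deriv_eq_zero (convex_ball z₀ r).isPreconnected
      (hφ.differentiableOn.mono hsub) (fun z hz => (hball z hz).1) hz (mem_ball_self hr)
  exact not_isOpen_singleton (φ z₀) (himage ▸ hopen _ hsub isOpen_ball)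

/-- At a critical value `φ z₀` the singularity is removable: `descend U φ ψ` is continuous there
and differentiable at all nearby values, since critical points of `φ` are isolated. -/
lemma differentiableOn_descend (hU : IsOpen U) (hφ : AnalyticOnNhd ℂ φ U)
    (hψ : DifferentiableOn ℂ ψ U) (hopen : ∀ O ⊆ U, IsOpen O → IsOpen (φ '' O))
    (hfib : ∀ z ∈ U, ∀ z' ∈ U, φ z = φ z' → ψ z = ψ z') :
    DifferentiableOn ℂ (descend U φ ψ) (φ '' U) := by
  rintro _ ⟨z₀, hz₀, rfl⟩
  obtain ⟨O, hO, hOopen, hz₀O⟩ := _root_.eventually_nhds_iff.mp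
    ((eventually_nhdsWithin_iff.mp (eventually_deriv_ne_zero hU hφ hopen hz₀)).and
      (hU.eventually_mem hz₀))
  have hdiff : ∀ᶠ w in 𝓝[≠] φ z₀, DifferentiableAt ℂ (descend U φ ψ) w := by
    rw [eventually_nhdsWithin_iff]
    filter_upwards [(hopen O (fun z hz => (hO z hz).2) hOopen).mem_nhds ⟨z₀, hz₀O, rfl⟩]
    rintro _ ⟨z, hz, rfl⟩ hne
    have hzU := (hO z hz).2
    exact differentiableAt_descend_of_deriv_ne_zero hfib (hU.mem_nhds hzU) (hφ z hzU)
      (hψ.differentiableAt (hU.mem_nhds hzU)) ((hO z hz).1 (ne_of_apply_ne φ hne))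
  have hcont := continuousAt_descend hU hψ.continuousOn hopen hfib hz₀
  exact (Complex.analyticAt_of_differentiable_on_punctured_nhds_of_continuousAt hdiff
    hcont).differentiableAt.differentiableWithinAt

end Descent

lemma exists_differentiableOn_mapsTo_comp_eq {φ ψ : ℂ → ℂ} (hφ : DifferentiableOn ℂ φ unitDisk)
    (hφs : SurjOn φ unitDisk unitDisk) (hψ : DifferentiableOn ℂ ψ unitDisk)
    (hψm : MapsTo ψ unitDisk unitDisk)
    (hfib : ∀ z ∈ unitDisk, ∀ z' ∈ unitDisk, φ z = φ z' → ψ z = ψ z') :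
    ∃ s : ℂ → ℂ, DifferentiableOn ℂ s unitDisk ∧ MapsTo s unitDisk unitDisk ∧
      ∀ z ∈ unitDisk, s (φ z) = ψ z := by
  have hφa := hφ.analyticOnNhd isOpen_ball
  have hnonconst : ¬ ∃ c, ∀ z ∈ unitDisk, φ z = c := by
    rintro ⟨c, hc⟩
    obtain ⟨z₁, hz₁, h₁⟩ := hφs (mem_unitDisk.mpr (by norm_num : ‖(0 : ℂ)‖ < 1))
    obtain ⟨z₂, hz₂, h₂⟩ := hφs (mem_unitDisk.mpr (by norm_num : ‖(1 / 2 : ℂ)‖ < 1))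
    have : (0 : ℂ) = 1 / 2 := by rw [← h₁, ← h₂, hc z₁ hz₁, hc z₂ hz₂]
    norm_num at this
  have hopen := (hφa.is_constant_or_isOpen (convex_ball (0 : ℂ) 1).isPreconnected).resolve_left
    hnonconst
  refine ⟨descend unitDisk φ ψ,
    (differentiableOn_descend isOpen_ball hφa hψ hopen hfib).mono hφs, ?_,
    fun z hz => descend_apply hfib hz⟩
  intro w hw
  obtain ⟨z, hz, rfl⟩ := hφs hw
  rw [descend_apply hfib hz]
  exact hψm hz

/-- The Schwarz lemma for `g` and for `h` gives `‖g z‖ = ‖z‖`; by its equality case `g` is a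
rotation. -/
lemma exists_eqOn_mul_of_leftInvOn {g h : ℂ → ℂ} (hg : DifferentiableOn ℂ g unitDisk)
    (hh : DifferentiableOn ℂ h unitDisk) (hgm : MapsTo g unitDisk unitDisk)
    (hhm : MapsTo h unitDisk unitDisk) (hg0 : g 0 = 0) (hh0 : h 0 = 0)
    (hhg : ∀ z ∈ unitDisk, h (g z) = z) :
    ∃ c : ℂ, ‖c‖ = 1 ∧ EqOn g (fun z => c * z) unitDisk := by
  have hz₀ : (1 / 2 : ℂ) ∈ unitDisk := mem_unitDisk.mpr (by norm_num)
  have hgm' : MapsTo g unitDisk (closedBall 0 1) := hgm.mono_right ball_subset_closedBall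
  have hle : ‖g (1 / 2)‖ ≤ ‖(1 / 2 : ℂ)‖ :=
    Complex.norm_le_norm_of_mapsTo_ball hg hgm' hg0 (mem_unitDisk.mp hz₀)
  have hge : ‖(1 / 2 : ℂ)‖ ≤ ‖g (1 / 2)‖ := by
    simpa only [hhg _ hz₀] using Complex.norm_le_norm_of_mapsTo_ball hh
      (hhm.mono_right ball_subset_closedBall) hh0 (mem_unitDisk.mp (hgm hz₀))
  have hslope : ‖dslope g 0 (1 / 2)‖ = 1 / 1 := by
    rw [dslope_of_ne _ (by norm_num), slope_def_field, hg0, sub_zero, sub_zero, norm_div,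
      le_antisymm hle hge]
    norm_num
  refine ⟨dslope g 0 (1 / 2), by simpa using hslope, fun z hz => ?_⟩
  have hgm'' : MapsTo g unitDisk (closedBall (g 0) 1) := by rwa [hg0]
  simpa [hg0, mul_comm] using
    Complex.affine_of_mapsTo_ball_of_norm_dslope_eq_div hg hgm'' hz₀ hslope hz

lemma exists_eqOn_mul_blaschkeFactor {s t : ℂ → ℂ} (hs : DifferentiableOn ℂ s unitDisk)
    (ht : DifferentiableOn ℂ t unitDisk) (hsm : MapsTo s unitDisk unitDisk)
    (htm : MapsTo t unitDisk unitDisk) (hts : ∀ w ∈ unitDisk, t (s w) = w)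
    (hst : ∀ w ∈ unitDisk, s (t w) = w) :
    ∃ c a : ℂ, ‖c‖ = 1 ∧ ‖a‖ < 1 ∧ EqOn s (fun w => c * blaschkeFactor a w) unitDisk := by
  have h0 : (0 : ℂ) ∈ unitDisk := mem_unitDisk.mpr (by simp)
  set a := t 0
  have ha : ‖a‖ < 1 := mem_unitDisk.mp (htm h0)
  have ha' : ‖-a‖ < 1 := by rwa [norm_neg]
  have hg0 : (s ∘ blaschkeFactor (-a)) 0 = 0 := by
    rw [Function.comp_apply, blaschkeFactor_neg_zero, hst 0 h0]
  have hleft : ∀ z ∈ unitDisk, (blaschkeFactor a ∘ t) ((s ∘ blaschkeFactor (-a)) z) = z :=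
    fun z hz => by
      rw [Function.comp_apply, Function.comp_apply, hts _ (mapsTo_blaschkeFactor ha' hz),
        blaschkeFactor_blaschkeFactor_neg ha (mem_unitDisk.mp hz)]
  obtain ⟨c, hc, hsc⟩ := exists_eqOn_mul_of_leftInvOn
    (hs.comp (differentiableOn_blaschkeFactor ha') (mapsTo_blaschkeFactor ha'))
    ((differentiableOn_blaschkeFactor ha).comp ht htm) (hsm.comp (mapsTo_blaschkeFactor ha'))
    ((mapsTo_blaschkeFactor ha).comp htm) hg0 (blaschkeFactor_self a) hleft
  refine ⟨c, a, hc, ha, fun w hw => ?_⟩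
  rw [← hsc (mapsTo_blaschkeFactor ha hw), Function.comp_apply,
    blaschkeFactor_neg_blaschkeFactor ha (mem_unitDisk.mp hw)]

lemma isBlaschkeOf_one_mul_blaschkeFactor {c a : ℂ} (hc : ‖c‖ = 1) (ha : ‖a‖ < 1) :
    IsBlaschkeOf 1 (fun z => c * blaschkeFactor a z) :=
  ⟨c, fun _ => a, hc, fun _ => ha, fun z => by simp [blaschkeFactor]⟩

lemma conj_mul_self_of_norm_eq_one {c : ℂ} (hc : ‖c‖ = 1) : conj c * c = 1 := by
  rw [Complex.conj_mul', hc]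
  norm_num

lemma conj_mul_blaschkeFactor_neg_mul {c : ℂ} (hc : ‖c‖ = 1) (a w : ℂ) :
    conj c * blaschkeFactor (-(c * a)) w = blaschkeFactor (-a) (conj c * w) := by
  have hcc := conj_mul_self_of_norm_eq_one hc
  simp only [blaschkeFactor, map_neg, map_mul, ← mul_div_assoc]
  congr 1
  · linear_combination a * hcc
  · ring

lemma exists_isBlaschkeOf_one_of_invOn {s t : ℂ → ℂ} (hs : DifferentiableOn ℂ s unitDisk)
    (ht : DifferentiableOn ℂ t unitDisk) (hsm : MapsTo s unitDisk unitDisk)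
    (htm : MapsTo t unitDisk unitDisk) (hts : ∀ w ∈ unitDisk, t (s w) = w)
    (hst : ∀ w ∈ unitDisk, s (t w) = w) :
    ∃ σ τ : ℂ → ℂ, IsBlaschkeOf 1 σ ∧ IsBlaschkeOf 1 τ ∧
      (∀ w ∈ unitDisk, σ (τ w) = w ∧ τ (σ w) = w) ∧ EqOn s σ unitDisk ∧ EqOn t τ unitDisk := by
  obtain ⟨c, a, hc, ha, hsσ⟩ := exists_eqOn_mul_blaschkeFactor hs ht hsm htm hts hst
  have hcc := conj_mul_self_of_norm_eq_one hc
  have hca : ‖-(c * a)‖ < 1 := by rwa [norm_neg, norm_mul, hc, one_mul]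
  have hcw : ∀ w ∈ unitDisk, conj c * w ∈ unitDisk := fun w hw => by
    rw [mem_unitDisk, norm_mul, Complex.norm_conj, hc, one_mul]
    exact mem_unitDisk.mp hw
  have hστ : ∀ w ∈ unitDisk, c * blaschkeFactor a (conj c * blaschkeFactor (-(c * a)) w) = w ∧
      conj c * blaschkeFactor (-(c * a)) (c * blaschkeFactor a w) = w := fun w hw => by
    constructor
    · rw [conj_mul_blaschkeFactor_neg_mul hc,
        blaschkeFactor_blaschkeFactor_neg ha (mem_unitDisk.mp (hcw w hw)), ← mul_assoc,
        mul_comm c, hcc, one_mul]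
    · rw [conj_mul_blaschkeFactor_neg_mul hc, ← mul_assoc, hcc, one_mul,
        blaschkeFactor_neg_blaschkeFactor ha (mem_unitDisk.mp hw)]
  refine ⟨_, _, isBlaschkeOf_one_mul_blaschkeFactor hc ha,
    isBlaschkeOf_one_mul_blaschkeFactor (by rwa [Complex.norm_conj]) hca, hστ, hsσ,
    fun w hw => ?_⟩
  have hτw : conj c * blaschkeFactor (-(c * a)) w ∈ unitDisk := by
    rw [conj_mul_blaschkeFactor_neg_mul hc]
    exact mapsTo_blaschkeFactor (by rwa [norm_neg]) (hcw w hw)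
  have := hts _ hτw
  rw [hsσ hτw] at this
  simp only at this
  rwa [(hστ w hw).1] at this

lemma eq_of_eq_of_factorizations {α β γ δ : Type*} {U : Set α} {V : Set γ} {f : α → δ}
    {φ₁ : α → β} {f₁ : β → δ} {φ₂ : α → γ} {f₂ : γ → δ} (hφ₂ : MapsTo φ₂ U V)
    (hf₂ : InjOn f₂ V) (hfac₁ : ∀ z ∈ U, f z = f₁ (φ₁ z)) (hfac₂ : ∀ z ∈ U, f z = f₂ (φ₂ z)) :
    ∀ z ∈ U, ∀ z' ∈ U, φ₁ z = φ₁ z' → φ₂ z = φ₂ z' := fun z hz z' hz' h =>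
  hf₂ (hφ₂ hz) (hφ₂ hz') (by rw [← hfac₂ z hz, ← hfac₂ z' hz', hfac₁ z hz, hfac₁ z' hz', h])

theorem stmt13_general (n : ℕ) (hn : 1 ≤ n) (f φ₁ φ₂ f₁ f₂ : ℂ → ℂ)
    (hφ₁ : IsBlaschkeOf n φ₁) (hφ₂ : IsBlaschkeOf n φ₂)
    (hf₁inj : Set.InjOn f₁ unitDisk)
    (hf₂inj : Set.InjOn f₂ unitDisk)
    (hfac₁ : ∀ z ∈ unitDisk, f z = f₁ (φ₁ z))
    (hfac₂ : ∀ z ∈ unitDisk, f z = f₂ (φ₂ z)) :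
    ∃ σ τ : ℂ → ℂ, IsBlaschkeOf 1 σ ∧ IsBlaschkeOf 1 τ ∧
      (∀ w ∈ unitDisk, σ (τ w) = w ∧ τ (σ w) = w) ∧
      (∀ z ∈ unitDisk, φ₂ z = σ (φ₁ z)) ∧
      (∀ w ∈ unitDisk, f₂ w = f₁ (τ w)) := by
  obtain ⟨s, hs, hsm, hsφ⟩ := exists_differentiableOn_mapsTo_comp_eq hφ₁.differentiableOn
    (hφ₁.surjOn hn) hφ₂.differentiableOn (hφ₂.mapsTo hn)
    (eq_of_eq_of_factorizations (hφ₂.mapsTo hn) hf₂inj hfac₁ hfac₂)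
  obtain ⟨t, ht, htm, htφ⟩ := exists_differentiableOn_mapsTo_comp_eq hφ₂.differentiableOn
    (hφ₂.surjOn hn) hφ₁.differentiableOn (hφ₁.mapsTo hn)
    (eq_of_eq_of_factorizations (hφ₁.mapsTo hn) hf₁inj hfac₂ hfac₁)
  have hts : ∀ w ∈ unitDisk, t (s w) = w := by
    rintro _ hw
    obtain ⟨z, hz, rfl⟩ := hφ₁.surjOn hn hw
    rw [hsφ z hz, htφ z hz]
  have hst : ∀ w ∈ unitDisk, s (t w) = w := by
    rintro _ hw
    obtain ⟨z, hz, rfl⟩ := hφ₂.surjOn hn hw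
    rw [htφ z hz, hsφ z hz]
  obtain ⟨σ, τ, hσ, hτ, hστ, hsσ, htτ⟩ := exists_isBlaschkeOf_one_of_invOn hs ht hsm htm hts hst
  refine ⟨σ, τ, hσ, hτ, hστ, fun z hz => ?_, fun w hw => ?_⟩
  · rw [← hsφ z hz, hsσ (hφ₁.mapsTo hn hz)]
  · obtain ⟨z, hz, rfl⟩ := hφ₂.surjOn hn hw
    rw [← htτ (hφ₂.mapsTo hn hz), htφ z hz, ← hfac₁ z hz, hfac₂ z hz]

/-- The factorization of an exactly `n`-to-one analytic function on the disk into a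
univalent function composed with a finite Blaschke product of order `n` is unique
up to a conformal automorphism of the disk. -/
theorem stmt13 (n : ℕ) (hn : 1 ≤ n) (f φ₁ φ₂ f₁ f₂ : ℂ → ℂ)
    (hf : DifferentiableOn ℂ f unitDisk)
    (hcount : ∀ w ∈ f '' unitDisk, FiberCount f w n)
    (hφ₁ : IsBlaschkeOf n φ₁) (hφ₂ : IsBlaschkeOf n φ₂)
    (hf₁ : DifferentiableOn ℂ f₁ unitDisk) (hf₁inj : Set.InjOn f₁ unitDisk)
    (hf₂ : DifferentiableOn ℂ f₂ unitDisk) (hf₂inj : Set.InjOn f₂ unitDisk)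
    (hfac₁ : ∀ z ∈ unitDisk, f z = f₁ (φ₁ z))
    (hfac₂ : ∀ z ∈ unitDisk, f z = f₂ (φ₂ z)) :
    ∃ σ τ : ℂ → ℂ, IsBlaschkeOf 1 σ ∧ IsBlaschkeOf 1 τ ∧
      (∀ w ∈ unitDisk, σ (τ w) = w ∧ τ (σ w) = w) ∧
      (∀ z ∈ unitDisk, φ₂ z = σ (φ₁ z)) ∧
      (∀ w ∈ unitDisk, f₂ w = f₁ (τ w)) :=
  stmt13_general n hn f φ₁ φ₂ f₁ f₂ hφ₁ hφ₂ hf₁inj hf₂inj hfac₁ hfac₂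
end
end
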